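/- Let 𝒜 be an abelian category with enough projective objects and let X, Y be objects of 𝒜 with [X]₁ ⊆ [Y]_n for some n ≥ 1. Then for every m ≥ 0 there exist an m-th syzygy Ω^m(X) of X and an m-th syzygy Ω^m(Y) of Y such that [Ω^m(X)]₁ ⊆ [Ω^m(Y)]_n. -/

import Mathlib

open CategoryTheory Limits
open ZeroObject

attribute [local instance] CategoryTheory.Limits.HasFiniteBiproducts.of_hasFiniteProducts

noncomputable section

universe v u

variable {C : Type u} [Category.{v} C] [Abelian C]

/-- `add 𝒰`: the class of direct summands of finite direct sums of objects of `𝒰`. -/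
def addClosure (S : Set C) : Set C :=
  {X | ∃ (n : ℕ) (g : Fin n → C), (∀ k, g k ∈ S) ∧
    ∃ (s : X ⟶ ⨁ g) (p : (⨁ g) ⟶ X), s ≫ p = 𝟙 X}

/-- The operation `𝒰₁ • 𝒰₂`. -/
def bulletOp (S T : Set C) : Set C :=
  addClosure {X | ∃ (U V : C) (_ : U ∈ S) (_ : V ∈ T) (f : U ⟶ X) (g : X ⟶ V)
    (w : f ≫ g = 0), (ShortComplex.mk f g w).ShortExact}

/-- `[T]_n`. -/
def bracket (T : C) : ℕ → Set C
  | 0 => {X | IsZero X}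
  | n + 1 => bulletOp (addClosure {T}) (bracket T n)

/-- `K` is a syzygy of `X`. -/
def IsSyzygy (K X : C) : Prop :=
  ∃ (P : C) (ι : K ⟶ P) (π : P ⟶ X) (w : ι ≫ π = 0),
    Projective P ∧ (ShortComplex.mk ι π w).ShortExact

/-- `K` is an `m`-th syzygy of `X` (a `0`-th syzygy of `X` is `X` itself). -/
def IsNthSyzygy : ℕ → C → C → Prop
  | 0, K, X => K = X
  | n + 1, K, X => ∃ Y : C, IsNthSyzygy n Y X ∧ IsSyzygy K Y

/-! ### Auxiliary lemmas on `addClosure` -/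

theorem mem_addClosure_of_retract {S : Set C} {A M : C} (s : A ⟶ M) (p : M ⟶ A)
    (hsp : s ≫ p = 𝟙 A) (hM : M ∈ addClosure S) : A ∈ addClosure S := by
  obtain ⟨n, g, hg, σ, ρ, hσρ⟩ := hM
  refine ⟨n, g, hg, s ≫ σ, ρ ≫ p, ?_⟩
  rw [Category.assoc, ← Category.assoc σ ρ p, hσρ, Category.id_comp, hsp]

theorem mem_addClosure_self {S : Set C} {A : C} (hA : A ∈ S) : A ∈ addClosure S :=
  ⟨1, fun _ => A, fun _ => hA, biproduct.lift (fun _ => 𝟙 A), biproduct.desc (fun _ => 𝟙 A), by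
    rw [biproduct.lift_desc]; simp⟩

theorem zero_mem_addClosure {S : Set C} {A : C} (hA : IsZero A) : A ∈ addClosure S :=
  ⟨0, Fin.elim0, fun k => k.elim0, 0, 0, hA.eq_of_src _ _⟩

theorem addClosure_mono {S T : Set C} (h : S ⊆ T) : addClosure S ⊆ addClosure T := by
  rintro X ⟨n, g, hg, s, p, hsp⟩
  exact ⟨n, g, fun k => h (hg k), s, p, hsp⟩

/-- reindexing a biproduct along an equivalence gives a retract (in fact an iso). -/
theorem exists_retract_reindex {J K : Type} [Finite J] [Finite K] [DecidableEq K]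
    (e : J ≃ K) (f : K → C) :
    ∃ (s : (⨁ f) ⟶ ⨁ (f ∘ e)) (p : (⨁ (f ∘ e)) ⟶ ⨁ f), s ≫ p = 𝟙 (⨁ f) := by
  refine ⟨biproduct.lift (fun j => biproduct.π f (e j)),
    biproduct.lift (fun k => biproduct.π (f ∘ e) (e.symm k) ≫ eqToHom (by simp)), ?_⟩
  apply biproduct.hom_ext
  intro k
  rw [Category.assoc, biproduct.lift_π, ← Category.assoc, biproduct.lift_π, Category.id_comp]
  have : ∀ (k' : K) (hk : k' = k),
      biproduct.π f k' ≫ eqToHom (congrArg f hk) = biproduct.π f k := by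
    rintro _ rfl; simp
  exact this _ (e.apply_symm_apply k)

theorem biprod_mem_addClosure {S : Set C} {A B : C} (hA : A ∈ addClosure S)
    (hB : B ∈ addClosure S) : (A ⊞ B) ∈ addClosure S := by
  obtain ⟨a, g, hg, sA, pA, hsA⟩ := hA
  obtain ⟨b, g', hg', sB, pB, hsB⟩ := hB
  set f : Fin a ⊕ Fin b → C := Sum.elim g g' with hf
  set σ : ((⨁ g) ⊞ (⨁ g')) ⟶ ⨁ f := biproduct.lift (fun x : Fin a ⊕ Fin b =>
        (Sum.rec (fun j => biprod.fst ≫ biproduct.π g j)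
          (fun j => biprod.snd ≫ biproduct.π g' j) x : ((⨁ g) ⊞ (⨁ g')) ⟶ f x)) with hσdef
  set ρ : (⨁ f) ⟶ ((⨁ g) ⊞ (⨁ g')) :=
      biprod.lift (biproduct.lift (fun j => biproduct.π f (Sum.inl j)))
        (biproduct.lift (fun j => biproduct.π f (Sum.inr j))) with hρdef
  have hσρ : σ ≫ ρ = 𝟙 _ := by
    rw [hσdef, hρdef]
    apply biprod.hom_ext
    · apply biproduct.hom_ext
      intro j
      simp [hf]
      erw [biproduct.lift_π, biproduct.lift_π] <;> rfl
    · apply biproduct.hom_ext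
      intro j
      simp [hf]
      erw [biproduct.lift_π, biproduct.lift_π] <;> rfl
  obtain ⟨s', p', hsp'⟩ := exists_retract_reindex (finSumFinEquiv.symm) f
  refine ⟨a + b, f ∘ finSumFinEquiv.symm, ?_, ?_⟩
  · intro k
    cases hk : finSumFinEquiv.symm k with
    | inl j => simp only [Function.comp_apply, hk, hf, Sum.elim_inl]; exact hg j
    | inr j => simp only [Function.comp_apply, hk, hf, Sum.elim_inr]; exact hg' j
  · refine ⟨biprod.map sA sB ≫ σ ≫ s', p' ≫ ρ ≫ biprod.map pA pB, ?_⟩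
    calc (biprod.map sA sB ≫ σ ≫ s') ≫ p' ≫ ρ ≫ biprod.map pA pB
        = biprod.map sA sB ≫ (σ ≫ (s' ≫ p') ≫ ρ) ≫ biprod.map pA pB := by
          simp only [Category.assoc]
      _ = biprod.map sA sB ≫ biprod.map pA pB := by
          rw [hsp', Category.id_comp, hσρ, Category.id_comp]
      _ = 𝟙 _ := by apply biprod.hom_ext <;> simp [hsA, hsB]

theorem isZero_biproduct {m : ℕ} (g : Fin m → C) (hg : ∀ j, IsZero (g j)) :
    IsZero (⨁ g) := by
  rw [IsZero.iff_id_eq_zero]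
  apply biproduct.hom_ext
  intro j
  exact (hg j).eq_of_tgt _ _

theorem biproduct_mem_addClosure {S : Set C} : ∀ {m : ℕ} (g : Fin m → C),
    (∀ j, g j ∈ addClosure S) → (⨁ g) ∈ addClosure S := by
  intro m
  induction m with
  | zero =>
    intro g _
    exact zero_mem_addClosure (isZero_biproduct g (fun j => j.elim0))
  | succ m ih =>
    intro g hg
    have hmem : (g 0 ⊞ ⨁ (fun i : Fin m => g i.succ)) ∈ addClosure S :=
      biprod_mem_addClosure (hg 0) (ih _ (fun i => hg i.succ))
    refine mem_addClosure_of_retract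
      (biprod.lift (biproduct.π g 0) (biproduct.lift (fun i : Fin m => biproduct.π g i.succ)))
      (biprod.desc (biproduct.ι g 0) (biproduct.desc (fun i : Fin m => biproduct.ι g i.succ))) ?_ hmem
    rw [biprod.lift_desc, biproduct.lift_desc, ← biproduct.total, Fin.sum_univ_succ]

theorem addClosure_subset {S T : Set C} (h : S ⊆ addClosure T) :
    addClosure S ⊆ addClosure T := by
  rintro X ⟨n, g, hg, s, p, hsp⟩
  exact mem_addClosure_of_retract s p hsp (biproduct_mem_addClosure g (fun j => h (hg j)))

/-! ### Lemmas on `bracket` -/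

theorem zero_mem_bracket {T Z : C} (hZ : IsZero Z) : ∀ n, Z ∈ bracket T n
  | 0 => hZ
  | n + 1 => zero_mem_addClosure hZ

theorem addClosure_bracket {T : C} (n : ℕ) :
    addClosure (bracket T n) ⊆ bracket T n := by
  cases n with
  | zero =>
    rintro X ⟨m, g, hg, s, p, hsp⟩
    have h0 : IsZero (⨁ g) := isZero_biproduct g hg
    show IsZero X
    rw [IsZero.iff_id_eq_zero, ← hsp]
    calc s ≫ p = s ≫ 𝟙 _ ≫ p := by rw [Category.id_comp]
      _ = 0 := by rw [h0.eq_of_src (𝟙 _) 0]; simp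
  | succ n => exact addClosure_subset (fun X hX => hX)

theorem bracket_retract {T A M : C} {n : ℕ} (s : A ⟶ M) (p : M ⟶ A) (hsp : s ≫ p = 𝟙 A)
    (hM : M ∈ bracket T n) : A ∈ bracket T n :=
  addClosure_bracket n (mem_addClosure_of_retract s p hsp (mem_addClosure_self hM))

theorem bracket_biproduct {T : C} {n : ℕ} {m : ℕ} (g : Fin m → C)
    (hg : ∀ j, g j ∈ bracket T n) : (⨁ g) ∈ bracket T n :=
  addClosure_bracket n (biproduct_mem_addClosure g (fun j => mem_addClosure_self (hg j)))

/-- extension membership : generators of `bracket T (n+1)`. -/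
theorem extension_mem_bracket {T U A V : C} {n : ℕ} (hU : U ∈ addClosure {T})
    (hV : V ∈ bracket T n) (f : U ⟶ A) (g : A ⟶ V) (w : f ≫ g = 0)
    (hS : (ShortComplex.mk f g w).ShortExact) : A ∈ bracket T (n + 1) :=
  mem_addClosure_self ⟨U, V, hU, hV, f, g, w, hS⟩

theorem bracket_mono_of_mem {T T' : C} (h : T' ∈ addClosure {T}) :
    ∀ n, bracket T' n ⊆ bracket T n := by
  intro n
  induction n with
  | zero => exact fun X hX => hX
  | succ n ih =>
    apply addClosure_mono
    rintro X ⟨U, V, hU, hV, f, g, w, hS⟩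
    refine ⟨U, V, ?_, ih hV, f, g, w, hS⟩
    exact addClosure_subset (by rintro Z rfl; exact h) hU

/-- `X ∈ add {T}` implies `X ∈ bracket T (n+1)` via the extension `X = X → 0`. -/
theorem addClosure_subset_bracket_succ {T X : C} (hX : X ∈ addClosure {T}) (n : ℕ) :
    X ∈ bracket T (n + 1) := by
  have hepi : Epi (0 : X ⟶ (0 : C)) := ⟨fun u v _ => (isZero_zero C).eq_of_src u v⟩
  have hexact : (ShortComplex.mk (𝟙 X) (0 : X ⟶ (0 : C)) (by simp)).Exact := by
    apply ShortComplex.exact_of_f_is_kernel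
    exact KernelFork.IsLimit.ofι' _ _ (fun k _ => ⟨k, Category.comp_id k⟩)
  have hS : (ShortComplex.mk (𝟙 X) (0 : X ⟶ (0 : C)) (by simp)).ShortExact :=
    { exact := hexact, mono_f := inferInstance, epi_g := hepi }
  exact extension_mem_bracket hX (zero_mem_bracket (isZero_zero C) n) _ _ _ hS

theorem self_mem_bracket_one (X : C) : X ∈ bracket X 1 :=
  addClosure_subset_bracket_succ (mem_addClosure_self rfl) 0

theorem bracket_one_subset_addClosure (T : C) :
    bracket T 1 ⊆ addClosure {T} := by
  apply addClosure_subset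
  rintro A ⟨U, V, hU, hV, f, g, w, hS⟩
  haveI : Mono f := hS.mono_f
  have hg0 : (ShortComplex.mk f g w).g = 0 := (hV : IsZero V).eq_of_tgt _ _
  haveI : Epi f := hS.exact.epi_f hg0
  haveI : IsIso f := isIso_of_mono_of_epi f
  exact mem_addClosure_of_retract (inv f) f (by simp) hU

/-! ### Short exact sequence constructions -/

/-- The kernel short exact sequence of an epimorphism. -/
theorem kernelShortExact {P A : C} (π : P ⟶ A) [Epi π] :
    (ShortComplex.mk (kernel.ι π) π (kernel.condition π)).ShortExact :=
  { exact := ShortComplex.exact_of_f_is_kernel _ (kernelIsKernel π),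
    mono_f := inferInstance,
    epi_g := ‹_› }

/-- Finite biproducts of short exact sequences are short exact. -/
theorem biproduct_shortExact {J : Type} [Fintype J] {K P A : J → C}
    (ι : ∀ j, K j ⟶ P j) (π : ∀ j, P j ⟶ A j) (w : ∀ j, ι j ≫ π j = 0)
    (h : ∀ j, (ShortComplex.mk (ι j) (π j) (w j)).ShortExact) :
    (ShortComplex.mk (biproduct.map ι) (biproduct.map π) (by
      apply biproduct.hom_ext
      intro j
      simp [biproduct.map_π, reassoc_of% (w j)]
      simp [w j])).ShortExact := by
  haveI : ∀ j, Mono (ι j) := fun j => (h j).mono_f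
  haveI : ∀ j, Epi (π j) := fun j => (h j).epi_g
  haveI hmono : Mono (biproduct.map ι) := by
    apply Preadditive.mono_of_cancel_zero
    intro T t ht
    apply biproduct.hom_ext
    intro j
    have : (t ≫ biproduct.π _ j) ≫ ι j = 0 := by
      rw [Category.assoc, ← biproduct.map_π ι j, ← Category.assoc, ht, zero_comp]
    rw [zero_comp]
    exact zero_of_comp_mono (ι j) this
  haveI hepi : Epi (biproduct.map π) := by
    apply Preadditive.epi_of_cancel_zero
    intro T t ht
    apply biproduct.hom_ext'
    intro j
    have : π j ≫ (biproduct.ι _ j ≫ t) = 0 := by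
      rw [← Category.assoc, ← biproduct.ι_map π j, Category.assoc, ht, comp_zero]
    rw [comp_zero]
    exact zero_of_epi_comp (π j) this
  refine { exact := ?_, mono_f := hmono, epi_g := hepi }
  apply ShortComplex.exact_of_f_is_kernel
  apply KernelFork.IsLimit.ofι'
  intro T t ht
  have key : ∀ j, ∃ u : T ⟶ K j, u ≫ ι j = t ≫ biproduct.π _ j := by
    intro j
    have hw : (t ≫ biproduct.π _ j) ≫ π j = 0 := by
      rw [Category.assoc, ← biproduct.map_π π j, ← Category.assoc, ht, zero_comp]
    obtain ⟨u, hu⟩ := KernelFork.IsLimit.lift' (h j).fIsKernel _ hw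
    exact ⟨u, by simpa using hu⟩
  choose u hu using key
  refine ⟨biproduct.lift u, ?_⟩
  apply biproduct.hom_ext
  intro j
  rw [Category.assoc, biproduct.map_π, ← Category.assoc, biproduct.lift_π, hu]

/-- A syzygy of a retract is a retract of (syzygy ⊞ cover). -/
theorem retract_syzygy {K P M A : C} (ι : K ⟶ P) (π : P ⟶ M) (w : ι ≫ π = 0)
    (hS : (ShortComplex.mk ι π w).ShortExact) (hP : Projective P)
    (s : A ⟶ M) (p : M ⟶ A) (hsp : s ≫ p = 𝟙 A) :
    Epi (π ≫ p) ∧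
    ∃ (r : kernel (π ≫ p) ⟶ K ⊞ P) (t : K ⊞ P ⟶ kernel (π ≫ p)), r ≫ t = 𝟙 _ := by
  haveI : Epi π := hS.epi_g
  haveI : Epi p := epi_of_epi_fac hsp
  haveI hepi : Epi (π ≫ p) := epi_comp _ _
  refine ⟨hepi, ?_⟩
  set et : P ⟶ P := Projective.factorThru (π ≫ p ≫ s) π with hetdef
  have het : et ≫ π = π ≫ p ≫ s := Projective.factorThru_comp _ _
  have hr₁w : (kernel.ι (π ≫ p) ≫ et) ≫ π = 0 := by
    rw [Category.assoc, het,
      show kernel.ι (π ≫ p) ≫ π ≫ p ≫ s = (kernel.ι (π ≫ p) ≫ (π ≫ p)) ≫ s by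
        simp only [Category.assoc],
      kernel.condition, zero_comp]
  obtain ⟨r₁, hr₁⟩ := KernelFork.IsLimit.lift' hS.fIsKernel _ hr₁w
  have hr₁' : r₁ ≫ ι = kernel.ι (π ≫ p) ≫ et := by simpa using hr₁
  have ht₁w : ι ≫ π ≫ p = 0 := by rw [← Category.assoc, w, zero_comp]
  have ht₂w : (𝟙 P - et) ≫ π ≫ p = 0 := by
    rw [Preadditive.sub_comp, Category.id_comp, ← Category.assoc, het]
    simp [hsp]
  refine ⟨biprod.lift r₁ (kernel.ι _),
    biprod.desc (kernel.lift (π ≫ p) ι ht₁w) (kernel.lift (π ≫ p) (𝟙 P - et) ht₂w), ?_⟩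
  rw [← cancel_mono (kernel.ι (π ≫ p)), biprod.lift_desc, Preadditive.add_comp,
    Category.assoc, Category.assoc, kernel.lift_ι, kernel.lift_ι, hr₁',
    Preadditive.comp_sub, Category.comp_id, Category.id_comp]
  abel

/-- The horseshoe lemma: the syzygy of the middle of a short exact sequence (w.r.t. the
biproduct cover) is an extension of the syzygies of the outer terms. -/
theorem horseshoe {U A V KU PU KV PV : C}
    (f : U ⟶ A) (g : A ⟶ V) (wA : f ≫ g = 0)
    (hA : (ShortComplex.mk f g wA).ShortExact)
    (ιU : KU ⟶ PU) (πU : PU ⟶ U) (wU : ιU ≫ πU = 0)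
    (hU : (ShortComplex.mk ιU πU wU).ShortExact)
    (ιV : KV ⟶ PV) (πV : PV ⟶ V) (wV : ιV ≫ πV = 0)
    (hV : (ShortComplex.mk ιV πV wV).ShortExact)
    (l : PV ⟶ A) (hl : l ≫ g = πV) :
    Epi (biprod.desc (πU ≫ f) l) ∧
    ∃ (α : KU ⟶ kernel (biprod.desc (πU ≫ f) l))
      (β : kernel (biprod.desc (πU ≫ f) l) ⟶ KV) (wαβ : α ≫ β = 0),
      (ShortComplex.mk α β wαβ).ShortExact := by
  haveI : Mono f := hA.mono_f
  haveI : Epi g := hA.epi_g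
  haveI : Mono ιU := hU.mono_f
  haveI : Epi πU := hU.epi_g
  haveI : Mono ιV := hV.mono_f
  haveI : Epi πV := hV.epi_g
  set φ : (PU ⊞ PV) ⟶ A := biprod.desc (πU ≫ f) l with hφdef
  have hepi : Epi φ := by
    apply Preadditive.epi_of_cancel_zero
    intro Z c hc
    have h1 : (πU ≫ f) ≫ c = 0 := by
      rw [← biprod.inl_desc (πU ≫ f) l, Category.assoc, hc, comp_zero]
    have h2 : f ≫ c = 0 := zero_of_epi_comp πU (by rwa [← Category.assoc])
    obtain ⟨c', hc'⟩ := CokernelCofork.IsColimit.desc' hA.gIsCokernel c h2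
    have hc'' : g ≫ c' = c := by simpa using hc'
    have h3 : l ≫ c = 0 := by
      rw [← biprod.inr_desc (πU ≫ f) l, Category.assoc, hc, comp_zero]
    have h4 : πV ≫ c' = 0 := by
      rw [← hl, Category.assoc, hc'', h3]
    have h5 : c' = 0 := zero_of_epi_comp πV h4
    rw [← hc'', h5, comp_zero]
  refine ⟨hepi, ?_⟩
  have hαw : (ιU ≫ biprod.inl) ≫ φ = 0 := by
    rw [Category.assoc, hφdef, biprod.inl_desc, ← Category.assoc, wU, zero_comp]
  set α : KU ⟶ kernel φ := kernel.lift φ (ιU ≫ biprod.inl) hαw with hαdef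
  have hακ : α ≫ kernel.ι φ = ιU ≫ biprod.inl := kernel.lift_ι _ _ _
  have keygen : ∀ (T : C) (k : T ⟶ PU ⊞ PV), k ≫ φ = 0 →
      k ≫ biprod.fst ≫ (πU ≫ f) + k ≫ biprod.snd ≫ l = 0 := by
    intro T k hk
    rw [hφdef, biprod.desc_eq, Preadditive.comp_add] at hk
    simpa only [Category.assoc] using hk
  have key : kernel.ι φ ≫ biprod.fst ≫ (πU ≫ f) + kernel.ι φ ≫ biprod.snd ≫ l = 0 :=
    keygen _ _ (kernel.condition φ)
  have key' : kernel.ι φ ≫ biprod.snd ≫ l + kernel.ι φ ≫ biprod.fst ≫ (πU ≫ f) = 0 := by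
    rw [add_comm]; exact key
  have h2 : kernel.ι φ ≫ biprod.snd ≫ l = -(kernel.ι φ ≫ biprod.fst ≫ (πU ≫ f)) :=
    eq_neg_of_add_eq_zero_left key'
  have ht0 : (kernel.ι φ ≫ biprod.snd) ≫ πV = 0 := by
    have e3 : (kernel.ι φ ≫ biprod.snd) ≫ πV = (kernel.ι φ ≫ biprod.snd ≫ l) ≫ g := by
      rw [← hl]; simp only [Category.assoc]
    rw [e3, h2]
    simp only [Preadditive.neg_comp, Category.assoc, wA, comp_zero, neg_zero]
  obtain ⟨β, hβ'⟩ := KernelFork.IsLimit.lift' hV.fIsKernel _ ht0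
  have hβ : β ≫ ιV = kernel.ι φ ≫ biprod.snd := by simpa using hβ'
  have wαβ : α ≫ β = 0 := by
    apply zero_of_comp_mono ιV
    rw [Category.assoc, hβ, ← Category.assoc, hακ, Category.assoc, biprod.inl_snd, comp_zero]
  haveI hmonoα : Mono α := by
    haveI : Mono (ιU ≫ (biprod.inl : PU ⟶ PU ⊞ PV)) := mono_comp _ _
    exact mono_of_mono_fac hακ
  have hh0w : (ιV ≫ l) ≫ g = 0 := by rw [Category.assoc, hl, wV]
  obtain ⟨h0, hh0'⟩ := KernelFork.IsLimit.lift' hA.fIsKernel _ hh0w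
  have hh0 : h0 ≫ f = ιV ≫ l := by simpa using hh0'
  haveI hepiβ : Epi β := by
    have hmw : (biprod.lift (-(pullback.fst πU h0)) (pullback.snd πU h0 ≫ ιV)) ≫ φ = 0 := by
      rw [hφdef, biprod.lift_desc, Preadditive.neg_comp, Category.assoc, ← hh0]
      rw [show pullback.fst πU h0 ≫ πU ≫ f = (pullback.fst πU h0 ≫ πU) ≫ f from
        (Category.assoc _ _ _).symm, pullback.condition, Category.assoc]
      exact neg_add_cancel _
    set m : pullback πU h0 ⟶ kernel φ := kernel.lift φ _ hmw with hmdef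
    have hmβ : m ≫ β = pullback.snd πU h0 := by
      rw [← cancel_mono ιV, Category.assoc, hβ, ← Category.assoc, hmdef, kernel.lift_ι,
        biprod.lift_snd]
    haveI : Epi (pullback.snd πU h0) := inferInstance
    exact epi_of_epi_fac hmβ
  have hlim : IsLimit (KernelFork.ofι α wαβ) := by
    apply KernelFork.IsLimit.ofι'
    intro T t ht
    have hu2 : t ≫ kernel.ι φ ≫ biprod.snd = 0 := by
      calc t ≫ kernel.ι φ ≫ biprod.snd = (t ≫ β) ≫ ιV := by
            rw [← hβ]; simp only [Category.assoc]
        _ = 0 := by rw [ht, zero_comp]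
    have hufact : (t ≫ kernel.ι φ ≫ biprod.fst) ≫ biprod.inl = t ≫ kernel.ι φ := by
      apply biprod.hom_ext
      · simp
      · simp [hu2]
    have hu' : (t ≫ kernel.ι φ ≫ biprod.fst) ≫ πU = 0 := by
      apply zero_of_comp_mono f
      have hinl : (biprod.inl : PU ⟶ PU ⊞ PV) ≫ φ = πU ≫ f := by
        rw [hφdef, biprod.inl_desc]
      have e : ((t ≫ kernel.ι φ ≫ biprod.fst) ≫ πU) ≫ f
          = ((t ≫ kernel.ι φ ≫ biprod.fst) ≫ biprod.inl) ≫ φ := by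
        rw [Category.assoc (t ≫ kernel.ι φ ≫ biprod.fst) πU f,
          Category.assoc (t ≫ kernel.ι φ ≫ biprod.fst) biprod.inl φ, hinl]
      rw [e, hufact, Category.assoc, kernel.condition, comp_zero]
    obtain ⟨w', hw''⟩ := KernelFork.IsLimit.lift' hU.fIsKernel _ hu'
    have hw' : w' ≫ ιU = t ≫ kernel.ι φ ≫ biprod.fst := by simpa using hw''
    refine ⟨w', ?_⟩
    rw [← cancel_mono (kernel.ι φ)]
    calc (w' ≫ α) ≫ kernel.ι φ = w' ≫ (α ≫ kernel.ι φ) := by simp only [Category.assoc]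
      _ = (w' ≫ ιU) ≫ biprod.inl := by rw [hακ]; simp only [Category.assoc]
      _ = (t ≫ kernel.ι φ ≫ biprod.fst) ≫ biprod.inl := by rw [hw']
      _ = t ≫ kernel.ι φ := hufact
  have hse : (ShortComplex.mk α β wαβ).ShortExact :=
    { exact := ShortComplex.exact_of_f_is_kernel _ hlim,
      mono_f := hmonoα, epi_g := hepiβ }
  exact ⟨α, β, wαβ, hse⟩

/-- Fattening a short exact sequence by a projective summand. -/
theorem fatten_shortExact {K P B : C} (ι : K ⟶ P) (π : P ⟶ B) (w : ι ≫ π = 0)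
    (hS : (ShortComplex.mk ι π w).ShortExact) (Q : C) :
    (ShortComplex.mk (biprod.map ι (𝟙 Q)) ((biprod.fst : P ⊞ Q ⟶ P) ≫ π) (by
      rw [← Category.assoc, biprod.map_fst, Category.assoc, w, comp_zero])).ShortExact := by
  haveI : Mono ι := hS.mono_f
  haveI : Epi π := hS.epi_g
  haveI hmono : Mono (biprod.map ι (𝟙 Q)) := by
    apply Preadditive.mono_of_cancel_zero
    intro T t ht
    apply biprod.hom_ext
    · have : (t ≫ biprod.fst) ≫ ι = 0 := by
        rw [Category.assoc, ← biprod.map_fst ι (𝟙 Q), ← Category.assoc, ht, zero_comp]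
      rw [zero_comp]
      exact zero_of_comp_mono ι this
    · rw [zero_comp, ← Category.comp_id (t ≫ biprod.snd), Category.assoc,
        ← biprod.map_snd ι (𝟙 Q), ← Category.assoc, ht, zero_comp]
  haveI hepi : Epi ((biprod.fst : P ⊞ Q ⟶ P) ≫ π) := by
    have : (biprod.inl : P ⟶ P ⊞ Q) ≫ (biprod.fst ≫ π) = π := by
      rw [← Category.assoc, biprod.inl_fst, Category.id_comp]
    exact epi_of_epi_fac this
  refine { exact := ?_, mono_f := hmono, epi_g := hepi }
  apply ShortComplex.exact_of_f_is_kernel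
  apply KernelFork.IsLimit.ofι'
  intro T t ht
  have hw : (t ≫ biprod.fst) ≫ π = 0 := by
    rw [Category.assoc]; simpa only [Category.assoc] using ht
  obtain ⟨u, hu'⟩ := KernelFork.IsLimit.lift' hS.fIsKernel _ hw
  have hu : u ≫ ι = t ≫ biprod.fst := by simpa using hu'
  refine ⟨biprod.lift u (t ≫ biprod.snd), ?_⟩
  apply biprod.hom_ext
  · simp [hu]
  · simp

theorem projective_biproduct {J : Type} [Fintype J] (g : J → C) [∀ j, Projective (g j)] :
    Projective (⨁ g) where
  factors f e _ := ⟨biproduct.desc fun b => Projective.factorThru (biproduct.ι g b ≫ f) e,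
    by aesop_cat⟩

/-- Syzygy control for objects of `add {B}`. -/
theorem syzygy_of_add {B KB PB : C} (ιB : KB ⟶ PB) (πB : PB ⟶ B) (wB : ιB ≫ πB = 0)
    (hB : (ShortComplex.mk ιB πB wB).ShortExact) (hPB : Projective PB)
    {U : C} (hU : U ∈ addClosure ({B} : Set C)) :
    ∃ (K P : C) (ι : K ⟶ P) (π : P ⟶ U) (w : ι ≫ π = 0),
      (ShortComplex.mk ι π w).ShortExact ∧ Projective P ∧
      K ∈ addClosure ({KB ⊞ PB} : Set C) ∧ P ∈ addClosure ({KB ⊞ PB} : Set C) := by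
  obtain ⟨k, g, hg, s, p, hsp⟩ := hU
  have hgB : g = fun _ => B := funext (fun j => hg j)
  subst hgB
  have hses := biproduct_shortExact (fun _ : Fin k => ιB) (fun _ => πB) (fun _ => wB)
    (fun _ => hB)
  have hproj : Projective (⨁ (fun _ : Fin k => PB)) := by
    haveI : ∀ j : Fin k, Projective ((fun _ : Fin k => PB) j) := fun _ => hPB
    exact projective_biproduct _
  obtain ⟨hepi, r, t, hrt⟩ := retract_syzygy _ _ _ hses hproj s p hsp
  haveI := hepi
  have hmemKP : ((⨁ (fun _ : Fin k => KB)) ⊞ (⨁ (fun _ : Fin k => PB)))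
      ∈ addClosure ({KB ⊞ PB} : Set C) := by
    apply biprod_mem_addClosure
    · apply biproduct_mem_addClosure
      intro j
      exact mem_addClosure_of_retract biprod.inl biprod.fst (biprod.inl_fst)
        (mem_addClosure_self rfl)
    · apply biproduct_mem_addClosure
      intro j
      exact mem_addClosure_of_retract biprod.inr biprod.snd (biprod.inr_snd)
        (mem_addClosure_self rfl)
  refine ⟨kernel (biproduct.map (fun _ : Fin k => πB) ≫ p), ⨁ (fun _ : Fin k => PB),
    kernel.ι _, biproduct.map (fun _ => πB) ≫ p, kernel.condition _,
    kernelShortExact _, hproj, ?_, ?_⟩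
  · exact mem_addClosure_of_retract r t hrt hmemKP
  · apply biproduct_mem_addClosure
    intro j
    exact mem_addClosure_of_retract biprod.inr biprod.snd (biprod.inr_snd)
      (mem_addClosure_self rfl)

/-- The main induction: controlled syzygies for objects of `bracket B n`. -/
theorem main_syzygy {B KB PB : C} (ιB : KB ⟶ PB) (πB : PB ⟶ B) (wB : ιB ≫ πB = 0)
    (hB : (ShortComplex.mk ιB πB wB).ShortExact) (hPB : Projective PB) :
    ∀ (n : ℕ) (A : C), A ∈ bracket B n →
    ∃ (K P Q : C) (ι : K ⟶ P) (π : P ⟶ A) (w : ι ≫ π = 0),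
      (ShortComplex.mk ι π w).ShortExact ∧ Projective P ∧ Projective Q ∧
      K ∈ bracket (KB ⊞ Q) n ∧ P ∈ addClosure ({KB ⊞ Q} : Set C) := by
  intro n
  induction n with
  | zero =>
    intro A hA
    have hA' : IsZero A := hA
    have hmono : Mono (0 : (0 : C) ⟶ (0 : C)) :=
      ⟨fun u v _ => (isZero_zero C).eq_of_tgt u v⟩
    have hepi : Epi (0 : (0 : C) ⟶ A) := ⟨fun u v _ => hA'.eq_of_src u v⟩
    refine ⟨0, 0, PB, 0, 0, by simp, ?_, inferInstance, hPB, ?_, ?_⟩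
    · refine { exact := ?_, mono_f := hmono, epi_g := hepi }
      exact ShortComplex.exact_of_isZero_X₂ _ (isZero_zero C)
    · exact (isZero_zero C : (0 : C) ∈ bracket (KB ⊞ PB) 0)
    · exact zero_mem_addClosure (isZero_zero C)
  | succ n ih =>
    intro A hA
    obtain ⟨k, g, hg, s, p, hsp⟩ := hA
    have hgen : ∀ j : Fin k, ∃ (K P Q : C) (ι : K ⟶ P) (π : P ⟶ g j) (w : ι ≫ π = 0),
        (ShortComplex.mk ι π w).ShortExact ∧ Projective P ∧ Projective Q ∧
        K ∈ bracket (KB ⊞ (PB ⊞ Q)) (n + 1) ∧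
        P ∈ addClosure ({KB ⊞ (PB ⊞ Q)} : Set C) := by
      intro j
      obtain ⟨U, V, hU, hV, f, g', w', hSA⟩ := hg j
      obtain ⟨KU, PU, ιU, πU, wU, hSU, hPU, hKU, hPUm⟩ := syzygy_of_add ιB πB wB hB hPB hU
      obtain ⟨KV, PV, QV, ιV, πV, wV, hSV, hPV, hQV, hKV, hPVm⟩ := ih V hV
      haveI : Epi g' := hSA.epi_g
      haveI := hPV
      set l : PV ⟶ g j := Projective.factorThru πV g' with hldef
      have hl : l ≫ g' = πV := Projective.factorThru_comp _ _
      obtain ⟨hepiφ, α, β, wαβ, hSαβ⟩ := horseshoe f g' w' hSA ιU πU wU hSU ιV πV wV hSV l hl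
      haveI := hepiφ
      haveI := hPU
      have hW1 : (KB ⊞ PB) ∈ addClosure ({KB ⊞ (PB ⊞ QV)} : Set C) := by
        refine mem_addClosure_of_retract (biprod.map (𝟙 KB) biprod.inl)
          (biprod.map (𝟙 KB) biprod.fst) ?_ (mem_addClosure_self rfl)
        apply biprod.hom_ext <;> simp
      have hW2 : (KB ⊞ QV) ∈ addClosure ({KB ⊞ (PB ⊞ QV)} : Set C) := by
        refine mem_addClosure_of_retract (biprod.map (𝟙 KB) biprod.inr)
          (biprod.map (𝟙 KB) biprod.snd) ?_ (mem_addClosure_self rfl)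
        apply biprod.hom_ext <;> simp
      refine ⟨kernel (biprod.desc (πU ≫ f) l), PU ⊞ PV, QV, kernel.ι _,
        biprod.desc (πU ≫ f) l, kernel.condition _, kernelShortExact _,
        inferInstance, hQV, ?_, ?_⟩
      · exact extension_mem_bracket
          (addClosure_subset (by rintro Z rfl; exact hW1) hKU)
          (bracket_mono_of_mem hW2 n hKV) α β wαβ hSαβ
      · exact biprod_mem_addClosure
          (addClosure_subset (by rintro Z rfl; exact hW1) hPUm)
          (addClosure_subset (by rintro Z rfl; exact hW2) hPVm)
    choose K P Q ι π w hS hP hQ hK hPm using hgen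
    have hses := biproduct_shortExact ι π w hS
    have hPbig : Projective (⨁ P) := by haveI := hP; exact projective_biproduct _
    obtain ⟨hepi, r, t, hrt⟩ := retract_syzygy _ _ _ hses hPbig s p hsp
    haveI := hepi
    have hQbig : Projective (⨁ (fun j => PB ⊞ Q j)) := by
      haveI : ∀ j, Projective (PB ⊞ Q j) := fun j => by haveI := hQ j; infer_instance
      exact projective_biproduct _
    have hWj : ∀ j, (KB ⊞ (PB ⊞ Q j)) ∈
        addClosure ({KB ⊞ (⨁ (fun j => PB ⊞ Q j))} : Set C) := by
      intro j
      refine mem_addClosure_of_retract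
        (biprod.map (𝟙 KB) (biproduct.ι (fun j => PB ⊞ Q j) j))
        (biprod.map (𝟙 KB) (biproduct.π (fun j => PB ⊞ Q j) j)) ?_ (mem_addClosure_self rfl)
      apply biprod.hom_ext <;> simp [biproduct.ι_π]
    have hKbig : (⨁ K) ∈ bracket (KB ⊞ (⨁ (fun j => PB ⊞ Q j))) (n + 1) :=
      bracket_biproduct _ (fun j => bracket_mono_of_mem (hWj j) _ (hK j))
    have hPbigm : (⨁ P) ∈ addClosure
        ({KB ⊞ (⨁ (fun j => PB ⊞ Q j))} : Set C) :=
      biproduct_mem_addClosure _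
        (fun j => addClosure_subset (by rintro Z rfl; exact hWj j) (hPm j))
    have hKP : ((⨁ K) ⊞ (⨁ P)) ∈ bracket (KB ⊞ (⨁ (fun j => PB ⊞ Q j))) (n + 1) :=
      addClosure_bracket _ (biprod_mem_addClosure (mem_addClosure_self hKbig)
        (mem_addClosure_self (addClosure_subset_bracket_succ hPbigm n)))
    exact ⟨kernel (biproduct.map π ≫ p), ⨁ P, ⨁ (fun j => PB ⊞ Q j), kernel.ι _,
      biproduct.map π ≫ p, kernel.condition _, kernelShortExact _, hPbig, hQbig,
      bracket_retract r t hrt hKP, hPbigm⟩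

/-- Let `𝒜` be an abelian category with enough projectives and `X, Y`
objects with `[X]₁ ⊆ [Y]_n` for some `n ≥ 1`.  Then for every `m ≥ 0` there exist an `m`-th
syzygy `Ω^m(X)` of `X` and an `m`-th syzygy `Ω^m(Y)` of `Y` with
`[Ω^m(X)]₁ ⊆ [Ω^m(Y)]_n`. -/
theorem bracket_syzygy_subset [EnoughProjectives C]
    (X Y : C) (n : ℕ) (hn : 1 ≤ n) (h : bracket X 1 ⊆ bracket Y n) (m : ℕ) :
    ∃ (ΩX ΩY : C), IsNthSyzygy m ΩX X ∧ IsNthSyzygy m ΩY Y ∧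
      bracket ΩX 1 ⊆ bracket ΩY n := by
  have claim : ∀ m : ℕ, ∃ (ΩX ΩY : C),
      IsNthSyzygy m ΩX X ∧ IsNthSyzygy m ΩY Y ∧ ΩX ∈ bracket ΩY n := by
    intro m
    induction m with
    | zero => exact ⟨X, Y, rfl, rfl, h (self_mem_bracket_one X)⟩
    | succ m ihm =>
      obtain ⟨A, B, hA, hB, hmem⟩ := ihm
      have hSB := kernelShortExact (Projective.π B)
      obtain ⟨K, P, Q, ι, π, w, hS, hP, hQ, hK, hPm⟩ :=
        main_syzygy (kernel.ι (Projective.π B)) (Projective.π B)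
          (kernel.condition (Projective.π B)) hSB (Projective.projective_over B) n A hmem
      haveI := hQ
      refine ⟨K, kernel (Projective.π B) ⊞ Q, ⟨A, hA, P, ι, π, w, hP, hS⟩,
        ⟨B, hB, Projective.over B ⊞ Q, biprod.map (kernel.ι (Projective.π B)) (𝟙 Q),
          biprod.fst ≫ Projective.π B, ?_, inferInstance,
          fatten_shortExact _ _ _ hSB Q⟩, hK⟩
      rw [← Category.assoc, biprod.map_fst, Category.assoc, kernel.condition, comp_zero]
  obtain ⟨ΩX, ΩY, h1, h2, h3⟩ := claim m
  refine ⟨ΩX, ΩY, h1, h2, ?_⟩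
  intro Z hZ
  have hZ' : Z ∈ addClosure ({ΩX} : Set C) := bracket_one_subset_addClosure _ hZ
  exact addClosure_bracket n
    (addClosure_subset (by rintro W rfl; exact mem_addClosure_self h3) hZ')
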